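/- arXiv:1304.6528 — 4 statements merged into one kernel-verified Lean document; each statement's English description precedes it below -/
import Mathlib

section
/- Let X, Y be random variables (sequences) on finite probability spaces with joint law given by a source distribution and a conditional reproduction distribution. For each i, the following are equivalent: (1) the Markov chain X_{i+1}^n ↔ (X^i, Y^{i-1}) ↔ Y_i holds for all i = 0,...,n-1; (2) the Markov chain X_{i+1} ↔ X^i ↔ Y^i holds for all i = 0,...,n-1. (Equivalence of two conditional-independence characterizations of nonanticipation.) -/
open scoped BigOperators

/-- Probability of an event under a (finitely supported) distribution given as a pmf vector. -/
noncomputable def Pr {Ω : Type} [Fintype Ω] (μ : Ω → ℝ) (E : Ω → Prop) : ℝ :=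
  ∑ z, Set.indicator {w | E w} μ z

/-- `MC μ f g h` : the Markov chain `f ↔ g ↔ h`, i.e. `f` and `h` are conditionally
independent given `g`, under the joint law `μ`. -/
def MC {Ω A B C : Type} [Fintype Ω] (μ : Ω → ℝ) (f : Ω → A) (g : Ω → B) (h : Ω → C) : Prop :=
  ∀ (a : A) (b : B) (c : C),
    Pr μ (fun z => f z = a ∧ g z = b ∧ h z = c) * Pr μ (fun z => g z = b) =
      Pr μ (fun z => f z = a ∧ g z = b) * Pr μ (fun z => g z = b ∧ h z = c)

namespace NonAnt

variable {Ω : Type} [Fintype Ω]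

lemma Pr_congr {μ : Ω → ℝ} {E F : Ω → Prop} (h : ∀ z, E z ↔ F z) :
    Pr μ E = Pr μ F := by
  have hEF : E = F := funext fun z => propext (h z)
  rw [hEF]

lemma Pr_nonneg {μ : Ω → ℝ} (hμ0 : ∀ z, 0 ≤ μ z) (E : Ω → Prop) : 0 ≤ Pr μ E :=
  Finset.sum_nonneg fun z _ => Set.indicator_nonneg (fun w _ => hμ0 w) z

lemma Pr_mono {μ : Ω → ℝ} (hμ0 : ∀ z, 0 ≤ μ z) {E F : Ω → Prop}
    (h : ∀ z, E z → F z) : Pr μ E ≤ Pr μ F := by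
  classical
  refine Finset.sum_le_sum fun z _ => ?_
  simp only [Set.indicator_apply, Set.mem_setOf_eq]
  by_cases hz : E z
  · rw [if_pos hz, if_pos (h z hz)]
  · rw [if_neg hz]
    split_ifs
    · exact hμ0 z
    · exact le_rfl

lemma Pr_sum_fiber {A : Type} [Fintype A] {μ : Ω → ℝ} (f : Ω → A) (E : Ω → Prop) :
    ∑ a, Pr μ (fun z => f z = a ∧ E z) = Pr μ E := by
  classical
  unfold Pr
  rw [Finset.sum_comm]
  refine Finset.sum_congr rfl fun z _ => ?_
  simp only [Set.indicator_apply, Set.mem_setOf_eq]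
  by_cases hE : E z
  · simp [hE]
  · simp [hE]

variable {n : ℕ} {Xa Ya : Type} [Fintype Xa] [Fintype Ya]

noncomputable def PP (μ : ((Fin (n+1) → Xa) × (Fin (n+1) → Ya)) → ℝ)
    (s t : Finset (Fin (n+1))) (x : Fin (n+1) → Xa) (y : Fin (n+1) → Ya) : ℝ :=
  Pr μ fun z => (∀ j ∈ s, z.1 j = x j) ∧ ∀ j ∈ t, z.2 j = y j

lemma PP_congr {μ : ((Fin (n+1) → Xa) × (Fin (n+1) → Ya)) → ℝ}
    {s t : Finset (Fin (n+1))} {x x' : Fin (n+1) → Xa} {y y' : Fin (n+1) → Ya}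
    (hx : ∀ j ∈ s, x j = x' j) (hy : ∀ j ∈ t, y j = y' j) :
    PP μ s t x y = PP μ s t x' y' := by
  refine Pr_congr fun z => ?_
  constructor
  · rintro ⟨h1, h2⟩
    exact ⟨fun j hj => (h1 j hj).trans (hx j hj), fun j hj => (h2 j hj).trans (hy j hj)⟩
  · rintro ⟨h1, h2⟩
    exact ⟨fun j hj => (h1 j hj).trans (hx j hj).symm, fun j hj => (h2 j hj).trans (hy j hj).symm⟩

lemma PP_nonneg {μ : ((Fin (n+1) → Xa) × (Fin (n+1) → Ya)) → ℝ} (hμ0 : ∀ z, 0 ≤ μ z)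
    (s t : Finset (Fin (n+1))) (x : Fin (n+1) → Xa) (y : Fin (n+1) → Ya) :
    0 ≤ PP μ s t x y := Pr_nonneg hμ0 _

lemma PP_mono {μ : ((Fin (n+1) → Xa) × (Fin (n+1) → Ya)) → ℝ} (hμ0 : ∀ z, 0 ≤ μ z)
    {s s' t t' : Finset (Fin (n+1))} (hs : s ⊆ s') (ht : t ⊆ t')
    (x : Fin (n+1) → Xa) (y : Fin (n+1) → Ya) :
    PP μ s' t' x y ≤ PP μ s t x y := by
  refine Pr_mono hμ0 fun z hz => ?_
  exact ⟨fun j hj => hz.1 j (hs hj), fun j hj => hz.2 j (ht hj)⟩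

lemma PP_eq_zero {μ : ((Fin (n+1) → Xa) × (Fin (n+1) → Ya)) → ℝ} (hμ0 : ∀ z, 0 ≤ μ z)
    {s s' t t' : Finset (Fin (n+1))} (hs : s ⊆ s') (ht : t ⊆ t')
    {x : Fin (n+1) → Xa} {y : Fin (n+1) → Ya} (h : PP μ s t x y = 0) :
    PP μ s' t' x y = 0 :=
  le_antisymm (h ▸ PP_mono hμ0 hs ht x y) (PP_nonneg hμ0 _ _ _ _)

lemma sum_update_x (μ : ((Fin (n+1) → Xa) × (Fin (n+1) → Ya)) → ℝ)
    {s : Finset (Fin (n+1))} {k : Fin (n+1)} (hk : k ∈ s)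
    (t : Finset (Fin (n+1))) (x : Fin (n+1) → Xa) (y : Fin (n+1) → Ya) :
    ∑ v : Xa, PP μ s t (Function.update x k v) y = PP μ (s.erase k) t x y := by
  classical
  have key : ∀ v, PP μ s t (Function.update x k v) y
      = Pr μ (fun z => z.1 k = v ∧ ((∀ j ∈ s.erase k, z.1 j = x j) ∧ ∀ j ∈ t, z.2 j = y j)) := by
    intro v
    refine Pr_congr fun z => ?_
    constructor
    · rintro ⟨h1, h2⟩
      refine ⟨?_, fun j hj => ?_, h2⟩
      · have := h1 k hk; simpa using this
      · obtain ⟨hjk, hjs⟩ := Finset.mem_erase.mp hj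
        have := h1 j hjs
        rwa [Function.update_of_ne hjk] at this
    · rintro ⟨h0, h1, h2⟩
      refine ⟨fun j hj => ?_, h2⟩
      by_cases hjk : j = k
      · subst hjk; simpa using h0
      · rw [Function.update_of_ne hjk]; exact h1 j (Finset.mem_erase.mpr ⟨hjk, hj⟩)
  simp only [key]
  exact Pr_sum_fiber (μ := μ) (fun z => z.1 k)
    (fun z => (∀ j ∈ s.erase k, z.1 j = x j) ∧ ∀ j ∈ t, z.2 j = y j)

lemma sum_update_y (μ : ((Fin (n+1) → Xa) × (Fin (n+1) → Ya)) → ℝ)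
    {t : Finset (Fin (n+1))} {k : Fin (n+1)} (hk : k ∈ t)
    (s : Finset (Fin (n+1))) (x : Fin (n+1) → Xa) (y : Fin (n+1) → Ya) :
    ∑ v : Ya, PP μ s t x (Function.update y k v) = PP μ s (t.erase k) x y := by
  classical
  have key : ∀ v, PP μ s t x (Function.update y k v)
      = Pr μ (fun z => z.2 k = v ∧ ((∀ j ∈ s, z.1 j = x j) ∧ ∀ j ∈ t.erase k, z.2 j = y j)) := by
    intro v
    refine Pr_congr fun z => ?_
    constructor
    · rintro ⟨h1, h2⟩
      refine ⟨?_, h1, fun j hj => ?_⟩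
      · have := h2 k hk; simpa using this
      · obtain ⟨hjk, hjs⟩ := Finset.mem_erase.mp hj
        have := h2 j hjs
        rwa [Function.update_of_ne hjk] at this
    · rintro ⟨h0, h1, h2⟩
      refine ⟨h1, fun j hj => ?_⟩
      by_cases hjk : j = k
      · subst hjk; simpa using h0
      · rw [Function.update_of_ne hjk]; exact h2 j (Finset.mem_erase.mpr ⟨hjk, hj⟩)
  simp only [key]
  have := Pr_sum_fiber (μ := μ) (fun z => z.2 k)
    (fun z => (∀ j ∈ s, z.1 j = x j) ∧ ∀ j ∈ t.erase k, z.2 j = y j)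
  rw [this]
  rfl

variable {μ : ((Fin (n+1) → Xa) × (Fin (n+1) → Ya)) → ℝ}

lemma erase_x_eq {s₁ s₂ s₃ s₄ t₁ t₂ t₃ t₄ : Finset (Fin (n+1))} {k : Fin (n+1)}
    (hk1 : k ∈ s₁) (hk3 : k ∈ s₃) (hk2 : k ∉ s₂) (hk4 : k ∉ s₄)
    (H : ∀ x y, PP μ s₁ t₁ x y * PP μ s₂ t₂ x y = PP μ s₃ t₃ x y * PP μ s₄ t₄ x y) :
    ∀ x y, PP μ (s₁.erase k) t₁ x y * PP μ s₂ t₂ x y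
      = PP μ (s₃.erase k) t₃ x y * PP μ s₄ t₄ x y := by
  classical
  intro x y
  have c2 : ∀ v, PP μ s₂ t₂ (Function.update x k v) y = PP μ s₂ t₂ x y := fun v =>
    PP_congr (fun j hj => Function.update_of_ne (fun (h : j = k) => hk2 (h ▸ hj)) _ _) (fun j _ => rfl)
  have c4 : ∀ v, PP μ s₄ t₄ (Function.update x k v) y = PP μ s₄ t₄ x y := fun v =>
    PP_congr (fun j hj => Function.update_of_ne (fun (h : j = k) => hk4 (h ▸ hj)) _ _) (fun j _ => rfl)
  calc PP μ (s₁.erase k) t₁ x y * PP μ s₂ t₂ x y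
      = (∑ v, PP μ s₁ t₁ (Function.update x k v) y) * PP μ s₂ t₂ x y := by
        rw [sum_update_x μ hk1]
    _ = ∑ v, PP μ s₁ t₁ (Function.update x k v) y * PP μ s₂ t₂ (Function.update x k v) y := by
        rw [Finset.sum_mul]
        exact Finset.sum_congr rfl fun v _ => by rw [c2]
    _ = ∑ v, PP μ s₃ t₃ (Function.update x k v) y * PP μ s₄ t₄ (Function.update x k v) y :=
        Finset.sum_congr rfl fun v _ => H _ _
    _ = (∑ v, PP μ s₃ t₃ (Function.update x k v) y) * PP μ s₄ t₄ x y := by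
        rw [Finset.sum_mul]
        exact Finset.sum_congr rfl fun v _ => by rw [c4]
    _ = PP μ (s₃.erase k) t₃ x y * PP μ s₄ t₄ x y := by rw [sum_update_x μ hk3]

lemma erase_y_eq {s₁ s₂ s₃ s₄ t₁ t₂ t₃ t₄ : Finset (Fin (n+1))} {k : Fin (n+1)}
    (hk1 : k ∈ t₁) (hk4 : k ∈ t₄) (hk2 : k ∉ t₂) (hk3 : k ∉ t₃)
    (H : ∀ x y, PP μ s₁ t₁ x y * PP μ s₂ t₂ x y = PP μ s₃ t₃ x y * PP μ s₄ t₄ x y) :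
    ∀ x y, PP μ s₁ (t₁.erase k) x y * PP μ s₂ t₂ x y
      = PP μ s₃ t₃ x y * PP μ s₄ (t₄.erase k) x y := by
  classical
  intro x y
  have c2 : ∀ v, PP μ s₂ t₂ x (Function.update y k v) = PP μ s₂ t₂ x y := fun v =>
    PP_congr (fun j _ => rfl) (fun j hj => Function.update_of_ne (fun (h : j = k) => hk2 (h ▸ hj)) _ _)
  have c3 : ∀ v, PP μ s₃ t₃ x (Function.update y k v) = PP μ s₃ t₃ x y := fun v =>
    PP_congr (fun j _ => rfl) (fun j hj => Function.update_of_ne (fun (h : j = k) => hk3 (h ▸ hj)) _ _)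
  calc PP μ s₁ (t₁.erase k) x y * PP μ s₂ t₂ x y
      = (∑ v, PP μ s₁ t₁ x (Function.update y k v)) * PP μ s₂ t₂ x y := by
        rw [sum_update_y μ hk1]
    _ = ∑ v, PP μ s₁ t₁ x (Function.update y k v) * PP μ s₂ t₂ x (Function.update y k v) := by
        rw [Finset.sum_mul]
        exact Finset.sum_congr rfl fun v _ => by rw [c2]
    _ = ∑ v, PP μ s₃ t₃ x (Function.update y k v) * PP μ s₄ t₄ x (Function.update y k v) :=
        Finset.sum_congr rfl fun v _ => H _ _
    _ = PP μ s₃ t₃ x y * (∑ v, PP μ s₄ t₄ x (Function.update y k v)) := by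
        rw [Finset.mul_sum]
        exact Finset.sum_congr rfl fun v _ => by rw [c3]
    _ = PP μ s₃ t₃ x y * PP μ s₄ (t₄.erase k) x y := by rw [sum_update_y μ hk4]

lemma erase_many_x {s₂ s₄ t₁ t₂ t₃ t₄ : Finset (Fin (n+1))} (u : Finset (Fin (n+1))) :
    ∀ (s₁ s₃ : Finset (Fin (n+1))), u ⊆ s₁ → u ⊆ s₃ →
    (∀ k ∈ u, k ∉ s₂) → (∀ k ∈ u, k ∉ s₄) →
    (∀ x y, PP μ s₁ t₁ x y * PP μ s₂ t₂ x y = PP μ s₃ t₃ x y * PP μ s₄ t₄ x y) →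
    ∀ x y, PP μ (s₁ \ u) t₁ x y * PP μ s₂ t₂ x y
      = PP μ (s₃ \ u) t₃ x y * PP μ s₄ t₄ x y := by
  classical
  induction u using Finset.induction_on with
  | empty => intro s₁ s₃ _ _ _ _ H; simpa using H
  | @insert a u ha ih =>
    intro s₁ s₃ h1 h3 h2 h4 H
    have e1 : s₁ \ insert a u = (s₁ \ u).erase a := by
      ext j; simp [Finset.mem_sdiff, Finset.mem_erase]; tauto
    have e3 : s₃ \ insert a u = (s₃ \ u).erase a := by
      ext j; simp [Finset.mem_sdiff, Finset.mem_erase]; tauto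
    rw [e1, e3]
    refine erase_x_eq ?_ ?_ (h2 a (Finset.mem_insert_self a u)) (h4 a (Finset.mem_insert_self a u)) ?_
    · exact Finset.mem_sdiff.mpr ⟨h1 (Finset.mem_insert_self a u), ha⟩
    · exact Finset.mem_sdiff.mpr ⟨h3 (Finset.mem_insert_self a u), ha⟩
    · exact ih s₁ s₃ (fun k hk => h1 (Finset.mem_insert_of_mem hk))
        (fun k hk => h3 (Finset.mem_insert_of_mem hk))
        (fun k hk => h2 k (Finset.mem_insert_of_mem hk))
        (fun k hk => h4 k (Finset.mem_insert_of_mem hk)) H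

lemma erase_many_y {s₁ s₂ s₃ s₄ t₂ t₃ : Finset (Fin (n+1))} (u : Finset (Fin (n+1))) :
    ∀ (t₁ t₄ : Finset (Fin (n+1))), u ⊆ t₁ → u ⊆ t₄ →
    (∀ k ∈ u, k ∉ t₂) → (∀ k ∈ u, k ∉ t₃) →
    (∀ x y, PP μ s₁ t₁ x y * PP μ s₂ t₂ x y = PP μ s₃ t₃ x y * PP μ s₄ t₄ x y) →
    ∀ x y, PP μ s₁ (t₁ \ u) x y * PP μ s₂ t₂ x y
      = PP μ s₃ t₃ x y * PP μ s₄ (t₄ \ u) x y := by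
  classical
  induction u using Finset.induction_on with
  | empty => intro t₁ t₄ _ _ _ _ H; simpa using H
  | @insert a u ha ih =>
    intro t₁ t₄ h1 h4 h2 h3 H
    have e1 : t₁ \ insert a u = (t₁ \ u).erase a := by
      ext j; simp [Finset.mem_sdiff, Finset.mem_erase]; tauto
    have e4 : t₄ \ insert a u = (t₄ \ u).erase a := by
      ext j; simp [Finset.mem_sdiff, Finset.mem_erase]; tauto
    rw [e1, e4]
    refine erase_y_eq ?_ ?_ (h2 a (Finset.mem_insert_self a u)) (h3 a (Finset.mem_insert_self a u)) ?_
    · exact Finset.mem_sdiff.mpr ⟨h1 (Finset.mem_insert_self a u), ha⟩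
    · exact Finset.mem_sdiff.mpr ⟨h4 (Finset.mem_insert_self a u), ha⟩
    · exact ih t₁ t₄ (fun k hk => h1 (Finset.mem_insert_of_mem hk))
        (fun k hk => h4 (Finset.mem_insert_of_mem hk))
        (fun k hk => h2 k (Finset.mem_insert_of_mem hk))
        (fun k hk => h3 k (Finset.mem_insert_of_mem hk)) H

def sle (n i : ℕ) : Finset (Fin (n+1)) := Finset.univ.filter fun j => (j : ℕ) ≤ i
def tlt (n i : ℕ) : Finset (Fin (n+1)) := Finset.univ.filter fun j => (j : ℕ) < i

@[simp] lemma mem_sle {i : ℕ} {j : Fin (n+1)} : j ∈ sle n i ↔ (j : ℕ) ≤ i := by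
  simp [sle]
@[simp] lemma mem_tlt {i : ℕ} {j : Fin (n+1)} : j ∈ tlt n i ↔ (j : ℕ) < i := by
  simp [tlt]

lemma tlt_zero : tlt n 0 = ∅ := by ext j; simp
lemma sle_self : sle n n = Finset.univ := by ext j; simp [Nat.lt_succ_iff.mp j.isLt]
lemma sle_subset {i k : ℕ} (h : i ≤ k) : sle n i ⊆ sle n k := fun j hj => by
  simp at hj ⊢; omega
lemma tlt_subset {i k : ℕ} (h : i ≤ k) : tlt n i ⊆ tlt n k := fun j hj => by
  simp at hj ⊢; omega
lemma sle_subset_univ {i : ℕ} : sle n i ⊆ Finset.univ := Finset.subset_univ _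
lemma empty_subset' {s : Finset (Fin (n+1))} : ∅ ⊆ s := Finset.empty_subset _

/-- `X_{>i..n} jointly with everything: Y^i ⊥ X (all) | X^{≤ i}` style statements. -/
def StA (μ : ((Fin (n+1) → Xa) × (Fin (n+1) → Ya)) → ℝ) (i : ℕ) : Prop :=
  ∀ x y, PP μ Finset.univ (tlt n (i+1)) x y * PP μ (sle n i) (tlt n i) x y
    = PP μ Finset.univ (tlt n i) x y * PP μ (sle n i) (tlt n (i+1)) x y

def StB (μ : ((Fin (n+1) → Xa) × (Fin (n+1) → Ya)) → ℝ) (i : ℕ) : Prop :=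
  ∀ x y, PP μ (sle n (i+1)) (tlt n (i+1)) x y * PP μ (sle n i) ∅ x y
    = PP μ (sle n (i+1)) ∅ x y * PP μ (sle n i) (tlt n (i+1)) x y

def StS (μ : ((Fin (n+1) → Xa) × (Fin (n+1) → Ya)) → ℝ) (i : ℕ) : Prop :=
  ∀ x y, PP μ Finset.univ (tlt n i) x y * PP μ (sle n i) ∅ x y
    = PP μ Finset.univ ∅ x y * PP μ (sle n i) (tlt n i) x y

def StS' (μ : ((Fin (n+1) → Xa) × (Fin (n+1) → Ya)) → ℝ) (i : ℕ) : Prop :=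
  ∀ x y, PP μ Finset.univ (tlt n (i+1)) x y * PP μ (sle n i) ∅ x y
    = PP μ Finset.univ ∅ x y * PP μ (sle n i) (tlt n (i+1)) x y

def StT (μ : ((Fin (n+1) → Xa) × (Fin (n+1) → Ya)) → ℝ) (i k : ℕ) : Prop :=
  ∀ x y, PP μ (sle n k) (tlt n (i+1)) x y * PP μ (sle n i) ∅ x y
    = PP μ (sle n k) ∅ x y * PP μ (sle n i) (tlt n (i+1)) x y

lemma cancel {p a c : ℝ} (h : a * p = c * p) (hp : p = 0 → a = 0 ∧ c = 0) : a = c := by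
  rcases eq_or_ne p 0 with h0 | h0
  · obtain ⟨ha, hc⟩ := hp h0; rw [ha, hc]
  · exact mul_right_cancel₀ h0 h

lemma StS_zero : StS μ 0 := by
  intro x y
  rw [tlt_zero]

lemma StS'_of (hμ0 : ∀ z, 0 ≤ μ z) {i : ℕ} (hS : StS μ i) (hA : StA μ i) : StS' μ i := by
  intro x y
  refine cancel (p := PP μ (sle n i) (tlt n i) x y) ?_ ?_
  · have a1 := hA x y
    have a2 := hS x y
    linear_combination PP μ (sle n i) ∅ x y * a1 + PP μ (sle n i) (tlt n (i+1)) x y * a2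
  · intro hp
    constructor
    · have := PP_eq_zero hμ0 (sle_subset_univ) (tlt_subset (Nat.le_succ i)) hp
      exact mul_eq_zero_of_left this _
    · have := PP_eq_zero hμ0 (le_refl (sle n i)) (tlt_subset (Nat.le_succ i)) hp
      exact mul_eq_zero_of_right _ this

lemma StB_of_StS' {i : ℕ} (hin : i < n) (hS' : StS' μ i) : StB μ i := by
  have key := erase_many_x (μ := μ) (Finset.univ \ sle n (i+1)) Finset.univ Finset.univ
    (Finset.subset_univ _) (Finset.subset_univ _)
    (fun k hk => by simp at hk ⊢; omega)
    (fun k hk => by simp at hk ⊢; omega) hS'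
  intro x y
  have e : Finset.univ \ (Finset.univ \ sle n (i+1)) = sle n (i+1) := by
    simp
  have := key x y
  rwa [e] at this

lemma StS_succ (hμ0 : ∀ z, 0 ≤ μ z) {i : ℕ} (hS' : StS' μ i) (hB : StB μ i) : StS μ (i+1) := by
  intro x y
  refine cancel (p := PP μ (sle n i) ∅ x y) ?_ ?_
  · have a1 := hS' x y
    have a2 := hB x y
    linear_combination PP μ (sle n (i+1)) ∅ x y * a1 - PP μ Finset.univ ∅ x y * a2
  · intro hp
    constructor
    · have := PP_eq_zero (t' := tlt n (i+1)) hμ0 (sle_subset_univ) (empty_subset') hp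
      exact mul_eq_zero_of_left this _
    · have := PP_eq_zero (t' := tlt n (i+1)) hμ0 (sle_subset (Nat.le_succ i)) (empty_subset') hp
      exact mul_eq_zero_of_right _ this

lemma StA_of (hμ0 : ∀ z, 0 ≤ μ z) {i : ℕ} (hS' : StS' μ i) (hS : StS μ i) : StA μ i := by
  intro x y
  refine cancel (p := PP μ (sle n i) ∅ x y) ?_ ?_
  · have a1 := hS' x y
    have a2 := hS x y
    linear_combination PP μ (sle n i) (tlt n i) x y * a1 - PP μ (sle n i) (tlt n (i+1)) x y * a2
  · intro hp
    constructor
    · have := PP_eq_zero (t' := tlt n (i+1)) hμ0 (sle_subset_univ) (empty_subset') hp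
      exact mul_eq_zero_of_left this _
    · have := PP_eq_zero (t' := tlt n i) hμ0 (sle_subset_univ) (empty_subset') hp
      exact mul_eq_zero_of_left this _

/-- From `StB k`, marginalize `y`-coordinates `i+1,...,k` : `Y^i ⊥ X_{k+1} | X^{≤k}`. -/
lemma StU_of_StB {i k : ℕ} (hik : i ≤ k) (hB : StB μ k) :
    ∀ x y, PP μ (sle n (k+1)) (tlt n (i+1)) x y * PP μ (sle n k) ∅ x y
      = PP μ (sle n (k+1)) ∅ x y * PP μ (sle n k) (tlt n (i+1)) x y := by
  have key := erase_many_y (μ := μ) (tlt n (k+1) \ tlt n (i+1)) (tlt n (k+1)) (tlt n (k+1))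
    (Finset.sdiff_subset) (Finset.sdiff_subset)
    (fun j hj => by simp)
    (fun j hj => by simp) hB
  intro x y
  have e : tlt n (k+1) \ (tlt n (k+1) \ tlt n (i+1)) = tlt n (i+1) := by
    ext j; simp; omega
  have := key x y
  rwa [e] at this

lemma StT_succ (hμ0 : ∀ z, 0 ≤ μ z) {i k : ℕ} (hik : i ≤ k) (hT : StT μ i k) (hB : StB μ k) :
    StT μ i (k+1) := by
  have hU := StU_of_StB hik hB
  intro x y
  refine cancel (p := PP μ (sle n k) ∅ x y) ?_ ?_
  · have a1 := hU x y
    have a2 := hT x y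
    linear_combination PP μ (sle n i) ∅ x y * a1 + PP μ (sle n (k+1)) ∅ x y * a2
  · intro hp
    constructor
    · have := PP_eq_zero (t' := tlt n (i+1)) hμ0 (sle_subset (Nat.le_succ k)) (empty_subset') hp
      exact mul_eq_zero_of_left this _
    · have := PP_eq_zero (t' := (∅ : Finset (Fin (n+1)))) hμ0 (sle_subset (Nat.le_succ k)) (empty_subset') hp
      exact mul_eq_zero_of_left this _

lemma conv2 (z₀ : (Fin (n+1) → Xa) × (Fin (n+1) → Ya)) {i : ℕ} (hin : i + 1 < n + 1) :
    MC μ (fun z => z.1 ⟨i+1, hin⟩)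
      (fun z => (fun j : {j : Fin (n+1) // (j : ℕ) ≤ i} => z.1 j.1))
      (fun z => (fun j : {j : Fin (n+1) // (j : ℕ) ≤ i} => z.2 j.1))
    ↔ StB μ i := by
  classical
  have hx_le : ∀ (x : Fin (n+1) → Xa) (z : (Fin (n+1) → Xa) × (Fin (n+1) → Ya)),
      ((fun j : {j : Fin (n+1) // (j : ℕ) ≤ i} => z.1 j.1)
        = (fun j : {j : Fin (n+1) // (j : ℕ) ≤ i} => x j.1))
        ↔ ∀ j ∈ sle n i, z.1 j = x j := by
    intro x z
    rw [funext_iff]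
    constructor
    · intro h j hj; exact h ⟨j, mem_sle.mp hj⟩
    · intro h j; exact h j.1 (mem_sle.mpr j.2)
  have hy_le : ∀ (y : Fin (n+1) → Ya) (z : (Fin (n+1) → Xa) × (Fin (n+1) → Ya)),
      ((fun j : {j : Fin (n+1) // (j : ℕ) ≤ i} => z.2 j.1)
        = (fun j : {j : Fin (n+1) // (j : ℕ) ≤ i} => y j.1))
        ↔ ∀ j ∈ sle n i, z.2 j = y j := by
    intro y z
    rw [funext_iff]
    constructor
    · intro h j hj; exact h ⟨j, mem_sle.mp hj⟩
    · intro h j; exact h j.1 (mem_sle.mpr j.2)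
  have hx_succ : ∀ (x : Fin (n+1) → Xa) (z : (Fin (n+1) → Xa) × (Fin (n+1) → Ya)),
      (z.1 ⟨i+1, hin⟩ = x ⟨i+1, hin⟩ ∧ ∀ j ∈ sle n i, z.1 j = x j)
        ↔ ∀ j ∈ sle n (i+1), z.1 j = x j := by
    intro x z
    constructor
    · rintro ⟨h0, h⟩ j hj
      have hj' : (j : ℕ) ≤ i + 1 := mem_sle.mp hj
      by_cases hji : (j : ℕ) ≤ i
      · exact h j (mem_sle.mpr hji)
      · have : j = ⟨i+1, hin⟩ := by
          apply Fin.ext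
          simp only [Fin.val_mk]
          omega
        rw [this]; exact h0
    · intro h
      exact ⟨h _ (mem_sle.mpr (by simp)),
        fun j hj => h j (mem_sle.mpr (by have := mem_sle.mp hj; omega))⟩
  have hy_ext : ∀ (y : Fin (n+1) → Ya) (z : (Fin (n+1) → Xa) × (Fin (n+1) → Ya)),
      (∀ j ∈ sle n i, z.2 j = y j) ↔ ∀ j ∈ tlt n (i+1), z.2 j = y j := by
    intro y z
    constructor
    · intro h j hj; exact h j (mem_sle.mpr (by have := mem_tlt.mp hj; omega))
    · intro h j hj; exact h j (mem_tlt.mpr (by have := mem_sle.mp hj; omega))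
  have e1 : ∀ (x : Fin (n+1) → Xa) (y : Fin (n+1) → Ya),
      Pr μ (fun z => z.1 ⟨i+1, hin⟩ = x ⟨i+1, hin⟩ ∧
          (fun j : {j : Fin (n+1) // (j : ℕ) ≤ i} => z.1 j.1)
            = (fun j : {j : Fin (n+1) // (j : ℕ) ≤ i} => x j.1) ∧
          (fun j : {j : Fin (n+1) // (j : ℕ) ≤ i} => z.2 j.1)
            = (fun j : {j : Fin (n+1) // (j : ℕ) ≤ i} => y j.1))
        = PP μ (sle n (i+1)) (tlt n (i+1)) x y := by
    intro x y
    refine Pr_congr fun z => ?_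
    rw [hx_le, hy_le]
    constructor
    · rintro ⟨h0, h1, h2⟩
      exact ⟨(hx_succ x z).mp ⟨h0, h1⟩, (hy_ext y z).mp h2⟩
    · rintro ⟨h1, h2⟩
      obtain ⟨h0, h1'⟩ := (hx_succ x z).mpr h1
      exact ⟨h0, h1', (hy_ext y z).mpr h2⟩
  have e2 : ∀ (x : Fin (n+1) → Xa) (y : Fin (n+1) → Ya),
      Pr μ (fun z => (fun j : {j : Fin (n+1) // (j : ℕ) ≤ i} => z.1 j.1)
            = (fun j : {j : Fin (n+1) // (j : ℕ) ≤ i} => x j.1))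
        = PP μ (sle n i) ∅ x y := by
    intro x y
    refine Pr_congr fun z => ?_
    rw [hx_le]
    constructor
    · intro h; exact ⟨h, by simp⟩
    · rintro ⟨h, -⟩; exact h
  have e3 : ∀ (x : Fin (n+1) → Xa) (y : Fin (n+1) → Ya),
      Pr μ (fun z => z.1 ⟨i+1, hin⟩ = x ⟨i+1, hin⟩ ∧
          (fun j : {j : Fin (n+1) // (j : ℕ) ≤ i} => z.1 j.1)
            = (fun j : {j : Fin (n+1) // (j : ℕ) ≤ i} => x j.1))
        = PP μ (sle n (i+1)) ∅ x y := by
    intro x y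
    refine Pr_congr fun z => ?_
    rw [hx_le]
    constructor
    · rintro ⟨h0, h1⟩; exact ⟨(hx_succ x z).mp ⟨h0, h1⟩, by simp⟩
    · rintro ⟨h1, -⟩
      obtain ⟨h0, h1'⟩ := (hx_succ x z).mpr h1
      exact ⟨h0, h1'⟩
  have e4 : ∀ (x : Fin (n+1) → Xa) (y : Fin (n+1) → Ya),
      Pr μ (fun z => (fun j : {j : Fin (n+1) // (j : ℕ) ≤ i} => z.1 j.1)
            = (fun j : {j : Fin (n+1) // (j : ℕ) ≤ i} => x j.1) ∧
          (fun j : {j : Fin (n+1) // (j : ℕ) ≤ i} => z.2 j.1)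
            = (fun j : {j : Fin (n+1) // (j : ℕ) ≤ i} => y j.1))
        = PP μ (sle n i) (tlt n (i+1)) x y := by
    intro x y
    refine Pr_congr fun z => ?_
    rw [hx_le, hy_le]
    constructor
    · rintro ⟨h1, h2⟩; exact ⟨h1, (hy_ext y z).mp h2⟩
    · rintro ⟨h1, h2⟩; exact ⟨h1, (hy_ext y z).mpr h2⟩
  constructor
  · intro H x y
    have h := H (x ⟨i+1, hin⟩)
      (fun j : {j : Fin (n+1) // (j : ℕ) ≤ i} => x j.1)
      (fun j : {j : Fin (n+1) // (j : ℕ) ≤ i} => y j.1)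
    rw [← e1 x y, ← e2 x y, ← e3 x y, ← e4 x y]
    exact h
  · intro hB a b c
    obtain ⟨x, hxa, hxb⟩ : ∃ x : Fin (n+1) → Xa, x ⟨i+1, hin⟩ = a ∧
        (fun j : {j : Fin (n+1) // (j : ℕ) ≤ i} => x j.1) = b :=
      ⟨fun j => if h : (j : ℕ) ≤ i then b ⟨j, h⟩ else a,
        dif_neg (by simp), funext fun j => dif_pos j.2⟩
    obtain ⟨y, hyc⟩ : ∃ y : Fin (n+1) → Ya,
        (fun j : {j : Fin (n+1) // (j : ℕ) ≤ i} => y j.1) = c :=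
      ⟨fun j => if h : (j : ℕ) ≤ i then c ⟨j, h⟩ else z₀.2 j,
        funext fun j => dif_pos j.2⟩
    have h := hB x y
    rw [← e1 x y, ← e2 x y, ← e3 x y, ← e4 x y] at h
    rw [hxa, hxb, hyc] at h
    exact h

lemma conv1 {i : ℕ} (hin : i < n + 1) :
    MC μ (fun z => (fun j : {j : Fin (n+1) // i < (j : ℕ)} => z.1 j.1))
      (fun z => ((fun j : {j : Fin (n+1) // (j : ℕ) ≤ i} => z.1 j.1),
                 (fun j : {j : Fin (n+1) // (j : ℕ) < i} => z.2 j.1)))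
      (fun z => z.2 ⟨i, hin⟩)
    ↔ StA μ i := by
  classical
  have hx_gt : ∀ (x : Fin (n+1) → Xa) (z : (Fin (n+1) → Xa) × (Fin (n+1) → Ya)),
      ((fun j : {j : Fin (n+1) // i < (j : ℕ)} => z.1 j.1)
        = (fun j : {j : Fin (n+1) // i < (j : ℕ)} => x j.1))
        ↔ ∀ j : Fin (n+1), i < (j : ℕ) → z.1 j = x j := by
    intro x z
    rw [funext_iff]
    constructor
    · intro h j hj; exact h ⟨j, hj⟩
    · intro h j; exact h j.1 j.2
  have hx_le : ∀ (x : Fin (n+1) → Xa) (z : (Fin (n+1) → Xa) × (Fin (n+1) → Ya)),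
      ((fun j : {j : Fin (n+1) // (j : ℕ) ≤ i} => z.1 j.1)
        = (fun j : {j : Fin (n+1) // (j : ℕ) ≤ i} => x j.1))
        ↔ ∀ j ∈ sle n i, z.1 j = x j := by
    intro x z
    rw [funext_iff]
    constructor
    · intro h j hj; exact h ⟨j, mem_sle.mp hj⟩
    · intro h j; exact h j.1 (mem_sle.mpr j.2)
  have hy_lt : ∀ (y : Fin (n+1) → Ya) (z : (Fin (n+1) → Xa) × (Fin (n+1) → Ya)),
      ((fun j : {j : Fin (n+1) // (j : ℕ) < i} => z.2 j.1)
        = (fun j : {j : Fin (n+1) // (j : ℕ) < i} => y j.1))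
        ↔ ∀ j ∈ tlt n i, z.2 j = y j := by
    intro y z
    rw [funext_iff]
    constructor
    · intro h j hj; exact h ⟨j, mem_tlt.mp hj⟩
    · intro h j; exact h j.1 (mem_tlt.mpr j.2)
  have hx_all : ∀ (x : Fin (n+1) → Xa) (z : (Fin (n+1) → Xa) × (Fin (n+1) → Ya)),
      ((∀ j : Fin (n+1), i < (j : ℕ) → z.1 j = x j) ∧ ∀ j ∈ sle n i, z.1 j = x j)
        ↔ ∀ j ∈ Finset.univ, z.1 j = x j := by
    intro x z
    constructor
    · rintro ⟨h1, h2⟩ j _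
      by_cases hj : (j : ℕ) ≤ i
      · exact h2 j (mem_sle.mpr hj)
      · exact h1 j (by omega)
    · intro h
      exact ⟨fun j _ => h j (Finset.mem_univ j), fun j _ => h j (Finset.mem_univ j)⟩
  have hy_ext : ∀ (y : Fin (n+1) → Ya) (z : (Fin (n+1) → Xa) × (Fin (n+1) → Ya)),
      ((∀ j ∈ tlt n i, z.2 j = y j) ∧ z.2 ⟨i, hin⟩ = y ⟨i, hin⟩)
        ↔ ∀ j ∈ tlt n (i+1), z.2 j = y j := by
    intro y z
    constructor
    · rintro ⟨h1, h0⟩ j hj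
      have hj' : (j : ℕ) < i + 1 := mem_tlt.mp hj
      by_cases hji : (j : ℕ) < i
      · exact h1 j (mem_tlt.mpr hji)
      · have : j = ⟨i, hin⟩ := by
          apply Fin.ext
          simp only [Fin.val_mk]
          omega
        rw [this]; exact h0
    · intro h
      exact ⟨fun j hj => h j (mem_tlt.mpr (by have := mem_tlt.mp hj; omega)),
        h _ (mem_tlt.mpr (by simp))⟩
  have e1 : ∀ (x : Fin (n+1) → Xa) (y : Fin (n+1) → Ya),
      Pr μ (fun z =>
          (fun j : {j : Fin (n+1) // i < (j : ℕ)} => z.1 j.1)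
            = (fun j : {j : Fin (n+1) // i < (j : ℕ)} => x j.1) ∧
          ((fun j : {j : Fin (n+1) // (j : ℕ) ≤ i} => z.1 j.1),
           (fun j : {j : Fin (n+1) // (j : ℕ) < i} => z.2 j.1))
            = ((fun j : {j : Fin (n+1) // (j : ℕ) ≤ i} => x j.1),
               (fun j : {j : Fin (n+1) // (j : ℕ) < i} => y j.1)) ∧
          z.2 ⟨i, hin⟩ = y ⟨i, hin⟩)
        = PP μ Finset.univ (tlt n (i+1)) x y := by
    intro x y
    refine Pr_congr fun z => ?_
    simp only [Prod.mk.injEq]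
    rw [hx_gt, hx_le, hy_lt]
    constructor
    · rintro ⟨h1, ⟨h2, h3⟩, h0⟩
      exact ⟨(hx_all x z).mp ⟨h1, h2⟩, (hy_ext y z).mp ⟨h3, h0⟩⟩
    · rintro ⟨h1, h2⟩
      obtain ⟨hg, hl⟩ := (hx_all x z).mpr h1
      obtain ⟨h3, h0⟩ := (hy_ext y z).mpr h2
      exact ⟨hg, ⟨hl, h3⟩, h0⟩
  have e2 : ∀ (x : Fin (n+1) → Xa) (y : Fin (n+1) → Ya),
      Pr μ (fun z =>
          ((fun j : {j : Fin (n+1) // (j : ℕ) ≤ i} => z.1 j.1),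
           (fun j : {j : Fin (n+1) // (j : ℕ) < i} => z.2 j.1))
            = ((fun j : {j : Fin (n+1) // (j : ℕ) ≤ i} => x j.1),
               (fun j : {j : Fin (n+1) // (j : ℕ) < i} => y j.1)))
        = PP μ (sle n i) (tlt n i) x y := by
    intro x y
    refine Pr_congr fun z => ?_
    simp only [Prod.mk.injEq]
    rw [hx_le, hy_lt]
  have e3 : ∀ (x : Fin (n+1) → Xa) (y : Fin (n+1) → Ya),
      Pr μ (fun z =>
          (fun j : {j : Fin (n+1) // i < (j : ℕ)} => z.1 j.1)
            = (fun j : {j : Fin (n+1) // i < (j : ℕ)} => x j.1) ∧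
          ((fun j : {j : Fin (n+1) // (j : ℕ) ≤ i} => z.1 j.1),
           (fun j : {j : Fin (n+1) // (j : ℕ) < i} => z.2 j.1))
            = ((fun j : {j : Fin (n+1) // (j : ℕ) ≤ i} => x j.1),
               (fun j : {j : Fin (n+1) // (j : ℕ) < i} => y j.1)))
        = PP μ Finset.univ (tlt n i) x y := by
    intro x y
    refine Pr_congr fun z => ?_
    simp only [Prod.mk.injEq]
    rw [hx_gt, hx_le, hy_lt]
    constructor
    · rintro ⟨h1, h2, h3⟩
      exact ⟨(hx_all x z).mp ⟨h1, h2⟩, h3⟩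
    · rintro ⟨h1, h3⟩
      obtain ⟨hg, hl⟩ := (hx_all x z).mpr h1
      exact ⟨hg, hl, h3⟩
  have e4 : ∀ (x : Fin (n+1) → Xa) (y : Fin (n+1) → Ya),
      Pr μ (fun z =>
          ((fun j : {j : Fin (n+1) // (j : ℕ) ≤ i} => z.1 j.1),
           (fun j : {j : Fin (n+1) // (j : ℕ) < i} => z.2 j.1))
            = ((fun j : {j : Fin (n+1) // (j : ℕ) ≤ i} => x j.1),
               (fun j : {j : Fin (n+1) // (j : ℕ) < i} => y j.1)) ∧
          z.2 ⟨i, hin⟩ = y ⟨i, hin⟩)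
        = PP μ (sle n i) (tlt n (i+1)) x y := by
    intro x y
    refine Pr_congr fun z => ?_
    simp only [Prod.mk.injEq]
    rw [hx_le, hy_lt]
    constructor
    · rintro ⟨⟨h1, h2⟩, h0⟩
      exact ⟨h1, (hy_ext y z).mp ⟨h2, h0⟩⟩
    · rintro ⟨h1, h2⟩
      obtain ⟨h3, h0⟩ := (hy_ext y z).mpr h2
      exact ⟨⟨h1, h3⟩, h0⟩
  constructor
  · intro H x y
    have h := H (fun j : {j : Fin (n+1) // i < (j : ℕ)} => x j.1)
      ((fun j : {j : Fin (n+1) // (j : ℕ) ≤ i} => x j.1),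
       (fun j : {j : Fin (n+1) // (j : ℕ) < i} => y j.1))
      (y ⟨i, hin⟩)
    rw [← e1 x y, ← e2 x y, ← e3 x y, ← e4 x y]
    exact h
  · intro hA a b c
    obtain ⟨b1, b2⟩ := b
    obtain ⟨x, hxa, hxb1⟩ : ∃ x : Fin (n+1) → Xa,
        (fun j : {j : Fin (n+1) // i < (j : ℕ)} => x j.1) = a ∧
        (fun j : {j : Fin (n+1) // (j : ℕ) ≤ i} => x j.1) = b1 :=
      ⟨fun j => if h : (j : ℕ) ≤ i then b1 ⟨j, h⟩ else a ⟨j, not_le.mp h⟩,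
        funext fun j => dif_neg (not_le.mpr j.2), funext fun j => dif_pos j.2⟩
    obtain ⟨y, hyb2, hyc⟩ : ∃ y : Fin (n+1) → Ya,
        (fun j : {j : Fin (n+1) // (j : ℕ) < i} => y j.1) = b2 ∧ y ⟨i, hin⟩ = c :=
      ⟨fun j => if h : (j : ℕ) < i then b2 ⟨j, h⟩ else c,
        funext fun j => dif_pos j.2, dif_neg (by simp)⟩
    have h := hA x y
    rw [← e1 x y, ← e2 x y, ← e3 x y, ← e4 x y] at h
    rw [hxa, hxb1, hyb2, hyc] at h
    exact h

end NonAnt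

/-- equivalence of the two conditional-independence characterizations of
nonanticipation: for all `i = 0,...,n-1`,
`X_{i+1}^n ↔ (X^i, Y^{i-1}) ↔ Y_i`  iff  `X_{i+1} ↔ X^i ↔ Y^i`. -/
theorem nonanticipation_MC_equiv {n : ℕ} {Xa Ya : Type} [Fintype Xa] [Fintype Ya]
    (μ : ((Fin (n+1) → Xa) × (Fin (n+1) → Ya)) → ℝ)
    (hμ0 : ∀ z, 0 ≤ μ z) (hμ1 : ∑ z, μ z = 1) :
    (∀ i : ℕ, ∀ hi : i < n,
      MC μ (fun z => (fun j : {j : Fin (n+1) // i < (j : ℕ)} => z.1 j.1))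
        (fun z => ((fun j : {j : Fin (n+1) // (j : ℕ) ≤ i} => z.1 j.1),
                   (fun j : {j : Fin (n+1) // (j : ℕ) < i} => z.2 j.1)))
        (fun z => z.2 ⟨i, by omega⟩))
    ↔
    (∀ i : ℕ, ∀ hi : i < n,
      MC μ (fun z => z.1 ⟨i+1, by omega⟩)
        (fun z => (fun j : {j : Fin (n+1) // (j : ℕ) ≤ i} => z.1 j.1))
        (fun z => (fun j : {j : Fin (n+1) // (j : ℕ) ≤ i} => z.2 j.1))) := by
  classical
  have hne : Nonempty ((Fin (n+1) → Xa) × (Fin (n+1) → Ya)) := by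
    by_contra h
    rw [not_nonempty_iff] at h
    rw [Finset.univ_eq_empty, Finset.sum_empty] at hμ1
    exact zero_ne_one hμ1
  obtain ⟨z₀⟩ := hne
  constructor
  · intro H1 i hi
    have hA : ∀ j, j < n → NonAnt.StA μ j := fun j hj =>
      (NonAnt.conv1 (μ := μ) (by omega)).mp (H1 j hj)
    have hS : ∀ j, j < n → NonAnt.StS μ j := by
      intro j
      induction j with
      | zero => intro _; exact NonAnt.StS_zero
      | succ m ih =>
        intro hm
        have hm' : m < n := by omega
        have hSm := ih hm'
        have hS'm := NonAnt.StS'_of hμ0 hSm (hA m hm')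
        exact NonAnt.StS_succ hμ0 hS'm (NonAnt.StB_of_StS' hm' hS'm)
    have hS' := NonAnt.StS'_of hμ0 (hS i hi) (hA i hi)
    exact (NonAnt.conv2 (μ := μ) z₀ (by omega)).mpr (NonAnt.StB_of_StS' hi hS')
  · intro H2 i hi
    have hB : ∀ j, j < n → NonAnt.StB μ j := fun j hj =>
      (NonAnt.conv2 (μ := μ) z₀ (by omega)).mp (H2 j hj)
    have hS' : ∀ j, j < n → NonAnt.StS' μ j := by
      intro j hj
      have hT : ∀ m : ℕ, j+1+m ≤ n → NonAnt.StT μ j (j+1+m) := by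
        intro m
        induction m with
        | zero => intro _; exact hB j hj
        | succ m ih =>
          intro hm
          have step := NonAnt.StT_succ (i := j) (k := j+1+m) hμ0 (by omega)
            (ih (by omega)) (hB (j+1+m) (by omega))
          exact step
      have hTn := hT (n - (j+1)) (by omega)
      have e : j+1+(n-(j+1)) = n := by omega
      rw [e] at hTn
      intro x y
      have h := hTn x y
      rwa [NonAnt.sle_self] at h
    have hS : ∀ j, j < n → NonAnt.StS μ j := by
      intro j
      induction j with
      | zero => intro _; exact NonAnt.StS_zero
      | succ m ih =>
        intro hm
        exact NonAnt.StS_succ hμ0 (hS' m (by omega)) (hB m (by omega))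
    exact (NonAnt.conv1 (μ := μ) (by omega)).mpr
      (NonAnt.StA_of hμ0 (hS' i hi) (hS i hi))
end

section
/- If the conditional distribution P_{Y^n|X^n} is nonanticipative (factorizes causally as ∏_{i=0}^n P_{Y_i|Y^{i-1},X^i}), then the mutual information equals the directed information: I(X^n; Y^n) = ∑_{i=0}^n I(X^i; Y_i | Y^{i-1}). -/
open scoped BigOperators

/-- Mutual information `I(X;Y)` of the two components of a joint pmf on a product. -/
noncomputable def MI {Xa Ya : Type} [Fintype Xa] [Fintype Ya] (μ : Xa × Ya → ℝ) : ℝ :=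
  ∑ z, μ z * Real.log (μ z / ((∑ y, μ (z.1, y)) * (∑ x, μ (x, z.2))))

/-- Conditional mutual information `I(f;g|h)` under the joint law `μ`. -/
noncomputable def CMI {Ω A B C : Type} [Fintype Ω]
    (μ : Ω → ℝ) (f : Ω → A) (g : Ω → B) (h : Ω → C) : ℝ :=
  ∑ z, μ z * Real.log
    (Pr μ (fun w => f w = f z ∧ g w = g z ∧ h w = h z) * Pr μ (fun w => h w = h z) /
      (Pr μ (fun w => f w = f z ∧ h w = h z) * Pr μ (fun w => g w = g z ∧ h w = h z)))

/-- Directed information `I(X^n → Y^n) = ∑_{i=0}^n I(X^i; Y_i | Y^{i-1})`. -/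
noncomputable def DI {n : ℕ} {Ω XT YT : Type} [Fintype Ω]
    (μ : Ω → ℝ) (xc : Ω → Fin (n+1) → XT) (yc : Ω → Fin (n+1) → YT) : ℝ :=
  ∑ i : Fin (n+1),
    CMI μ (fun w => (fun j : {j : Fin (n+1) // (j : ℕ) ≤ (i : ℕ)} => xc w j.1))
      (fun w => yc w i)
      (fun w => (fun j : {j : Fin (n+1) // (j : ℕ) < (i : ℕ)} => yc w j.1))

/-- A conditional distribution (kernel) `K` is nonanticipative (causally factorized):
`K(y^n|x^n) = ∏_{i=0}^n q_i(y_i | y^{i-1}, x^i)`. -/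
def NA {n : ℕ} {Xa Ya : Type} [Fintype Xa] [Fintype Ya]
    (K : (Fin (n+1) → Xa) → (Fin (n+1) → Ya) → ℝ) : Prop :=
  ∃ q : Fin (n+1) → (Fin (n+1) → Xa) → (Fin (n+1) → Ya) → Ya → ℝ,
    (∀ i x y b, 0 ≤ q i x y b) ∧ (∀ i x y, ∑ b, q i x y b = 1) ∧
    (∀ (i : Fin (n+1)) x x' y y', (∀ j : Fin (n+1), (j : ℕ) ≤ (i : ℕ) → x j = x' j) →
      (∀ j : Fin (n+1), (j : ℕ) < (i : ℕ) → y j = y' j) → q i x y = q i x' y') ∧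
    (∀ x y, K x y = ∏ i, q i x y (y i))


open scoped Classical

lemma Pr_eq_sum {Ω : Type} [Fintype Ω] (μ : Ω → ℝ) (E : Ω → Prop) :
    Pr μ E = ∑ z, if E z then μ z else 0 := by
  unfold Pr
  refine Finset.sum_congr rfl fun z _ => ?_
  simp [Set.indicator_apply, Set.mem_setOf_eq]

lemma Pr_congr {Ω : Type} [Fintype Ω] (μ : Ω → ℝ) {E F : Ω → Prop}
    (h : ∀ w, E w ↔ F w) : Pr μ E = Pr μ F := by
  rw [Pr_eq_sum, Pr_eq_sum]
  exact Finset.sum_congr rfl fun z _ => by rw [if_congr (h z) rfl rfl]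

lemma Pr_pos {Ω : Type} [Fintype Ω] {μ : Ω → ℝ} (h0 : ∀ w, 0 ≤ μ w)
    {E : Ω → Prop} {z : Ω} (hz : E z) (hμ : 0 < μ z) : 0 < Pr μ E := by
  rw [Pr_eq_sum]
  have h1 : (if E z then μ z else 0) ≤ ∑ w, if E w then μ w else 0 :=
    Finset.single_le_sum (f := fun w => if E w then μ w else 0) (fun w _ => by by_cases h : E w <;> simp [h, h0 w]) (Finset.mem_univ z)
  rw [if_pos hz] at h1
  linarith

lemma tailsum {n : ℕ} {Xa Ya : Type} [Fintype Xa] [Fintype Ya]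
    (q : Fin (n+1) → (Fin (n+1) → Xa) → (Fin (n+1) → Ya) → Ya → ℝ)
    (hq1 : ∀ i x y, ∑ b, q i x y b = 1)
    (hq3 : ∀ (i : Fin (n+1)) x x' y y', (∀ j : Fin (n+1), (j : ℕ) ≤ (i : ℕ) → x j = x' j) →
      (∀ j : Fin (n+1), (j : ℕ) < (i : ℕ) → y j = y' j) → q i x y = q i x' y') :
    ∀ (k m : ℕ), m + k = n+1 → ∀ (x' : Fin (n+1) → Xa) (y : Fin (n+1) → Ya),
    (∑ y' : Fin (n+1) → Ya,
      if (∀ j : Fin (n+1), (j:ℕ) < m → y' j = y j) then ∏ j, q j x' y' (y' j) else 0)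
    = ∏ j : Fin (n+1), if (j:ℕ) < m then q j x' y (y j) else 1 := by
  intro k
  induction k with
  | zero =>
    intro m hm x' y
    have hm' : m = n+1 := by omega
    subst hm'
    have hcond : ∀ y' : Fin (n+1) → Ya,
        (∀ j : Fin (n+1), (j:ℕ) < n+1 → y' j = y j) ↔ y' = y := by
      intro y'
      constructor
      · intro h; funext j; exact h j j.isLt
      · intro h j _; rw [h]
    rw [Finset.sum_eq_single y]
    · simp [hcond, Fin.is_le]
    · intro b _ hb
      rw [if_neg]
      rw [hcond b]; exact hb
    · intro h; exact absurd (Finset.mem_univ y) h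
  | succ k ih =>
    intro m hm x' y
    have hmn : m < n+1 := by omega
    set mf : Fin (n+1) := ⟨m, hmn⟩ with hmf
    -- split sum by value at coordinate mf
    have step1 : (∑ y' : Fin (n+1) → Ya,
        if (∀ j : Fin (n+1), (j:ℕ) < m → y' j = y j) then ∏ j, q j x' y' (y' j) else 0)
      = ∑ b : Ya, ∑ y' : Fin (n+1) → Ya,
        if (∀ j : Fin (n+1), (j:ℕ) < m+1 → y' j = Function.update y mf b j)
          then ∏ j, q j x' y' (y' j) else 0 := by
      rw [Finset.sum_comm]
      refine Finset.sum_congr rfl fun y' _ => ?_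
      rw [Finset.sum_eq_single (y' mf)]
      · congr 1
        apply propext
        constructor
        · intro h j hj
          rcases Nat.lt_succ_iff_lt_or_eq.mp hj with hj' | hj'
          · rw [Function.update_of_ne, h j hj']
            intro hjm; rw [hjm] at hj'; simp [hmf] at hj'
          · have : j = mf := by apply Fin.ext; simpa [hmf] using hj'
            rw [this, Function.update_self]
        · intro h j hj
          have h1 := h j (by omega)
          rw [Function.update_of_ne] at h1
          · exact h1
          · intro hjm; rw [hjm] at hj; simp [hmf] at hj
      · intro b _ hb
        rw [if_neg]
        intro h
        exact hb (by rw [h mf (by simp [hmf])] ; simp)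
      · intro h; exact absurd (Finset.mem_univ (y' mf)) h
    rw [step1]
    have step2 : ∀ b : Ya, (∑ y' : Fin (n+1) → Ya,
        if (∀ j : Fin (n+1), (j:ℕ) < m+1 → y' j = Function.update y mf b j)
          then ∏ j, q j x' y' (y' j) else 0)
      = q mf x' y b * ∏ j : Fin (n+1), if (j:ℕ) < m then q j x' y (y j) else 1 := by
      intro b
      rw [ih (m+1) (by omega) x' (Function.update y mf b)]
      -- extract factor at mf
      have hupd : ∀ j : Fin (n+1), (j:ℕ) ≤ m →
          q j x' (Function.update y mf b) = q j x' y := by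
        intro j hj
        apply hq3 j x' x' (Function.update y mf b) y (fun _ _ => rfl)
        intro j' hj'
        rw [Function.update_of_ne]
        intro hj'm; rw [hj'm] at hj'; simp [hmf] at hj'; omega
      have hterm : ∀ j : Fin (n+1),
          (if (j:ℕ) < m+1 then q j x' (Function.update y mf b) (Function.update y mf b j) else 1)
          = (if j = mf then q mf x' y b else 1) * (if (j:ℕ) < m then q j x' y (y j) else 1) := by
        intro j
        by_cases hj : j = mf
        · subst hj
          rw [if_pos (Nat.lt_succ_self m : (mf:ℕ) < m+1), if_pos rfl,
            if_neg (lt_irrefl m : ¬ ((mf:ℕ) < m)), mul_one,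
            Function.update_self, hupd mf (le_refl m)]
        · rw [if_neg hj, one_mul, Function.update_of_ne hj]
          by_cases hj2 : (j:ℕ) < m+1
          · have hj3 : (j:ℕ) < m := by
              rcases Nat.lt_succ_iff_lt_or_eq.mp hj2 with h | h
              · exact h
              · exact absurd (Fin.ext (by simp [hmf, h])) hj
            rw [if_pos hj2, if_pos hj3, hupd j (by omega)]
          · rw [if_neg hj2, if_neg (by omega)]
      calc (∏ j : Fin (n+1), if (j:ℕ) < m+1 then
              q j x' (Function.update y mf b) (Function.update y mf b j) else 1)
          = ∏ j : Fin (n+1), (if j = mf then q mf x' y b else 1) *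
              (if (j:ℕ) < m then q j x' y (y j) else 1) :=
            Finset.prod_congr rfl fun j _ => hterm j
        _ = (∏ j : Fin (n+1), if j = mf then q mf x' y b else 1) *
              ∏ j : Fin (n+1), if (j:ℕ) < m then q j x' y (y j) else 1 :=
            Finset.prod_mul_distrib
        _ = q mf x' y b * ∏ j : Fin (n+1), if (j:ℕ) < m then q j x' y (y j) else 1 := by
            rw [Finset.prod_ite_eq' Finset.univ mf (fun _ => q mf x' y b)]
            simp
    rw [Finset.sum_congr rfl fun b _ => step2 b, ← Finset.sum_mul, hq1, one_mul]


noncomputable def Qm {n : ℕ} {Xa Ya : Type}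
    (q : Fin (n+1) → (Fin (n+1) → Xa) → (Fin (n+1) → Ya) → Ya → ℝ)
    (x : Fin (n+1) → Xa) (y : Fin (n+1) → Ya) (m : ℕ) : ℝ :=
  ∏ j : Fin (n+1), if (j:ℕ) < m then q j x y (y j) else 1

noncomputable def Bm {n : ℕ} {Xa Ya : Type} [Fintype Xa]
    (PX : (Fin (n+1) → Xa) → ℝ)
    (q : Fin (n+1) → (Fin (n+1) → Xa) → (Fin (n+1) → Ya) → Ya → ℝ)
    (y : Fin (n+1) → Ya) (m : ℕ) : ℝ :=
  ∑ x', PX x' * Qm q x' y m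

noncomputable def Af {n : ℕ} {Xa : Type} [Fintype Xa]
    (PX : (Fin (n+1) → Xa) → ℝ) (x : Fin (n+1) → Xa) (i : Fin (n+1)) : ℝ :=
  ∑ x', if (∀ j : Fin (n+1), (j:ℕ) ≤ (i:ℕ) → x' j = x j) then PX x' else 0

noncomputable def Gm {n : ℕ} {Xa Ya : Type} [Fintype Xa]
    (PX : (Fin (n+1) → Xa) → ℝ)
    (q : Fin (n+1) → (Fin (n+1) → Xa) → (Fin (n+1) → Ya) → Ya → ℝ)
    (x : Fin (n+1) → Xa) (y : Fin (n+1) → Ya) (m : ℕ) : ℝ :=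
  Real.log (Qm q x y m) - Real.log (Bm PX q y m)

section PrComp
variable {n : ℕ} {Xa Ya : Type} [Fintype Xa] [Fintype Ya]
  (PX : (Fin (n+1) → Xa) → ℝ)
  (K : (Fin (n+1) → Xa) → (Fin (n+1) → Ya) → ℝ)
  (q : Fin (n+1) → (Fin (n+1) → Xa) → (Fin (n+1) → Ya) → Ya → ℝ)

lemma PrY_comp
    (hq1 : ∀ i x y, ∑ b, q i x y b = 1)
    (hq3 : ∀ (i : Fin (n+1)) x x' y y', (∀ j : Fin (n+1), (j : ℕ) ≤ (i : ℕ) → x j = x' j) →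
      (∀ j : Fin (n+1), (j : ℕ) < (i : ℕ) → y j = y' j) → q i x y = q i x' y')
    (hq4 : ∀ x y, K x y = ∏ i, q i x y (y i))
    (m : ℕ) (hm : m ≤ n+1) (y : Fin (n+1) → Ya) :
    Pr (fun z : (Fin (n+1) → Xa) × (Fin (n+1) → Ya) => PX z.1 * K z.1 z.2)
      (fun w => ∀ j : Fin (n+1), (j:ℕ) < m → w.2 j = y j)
    = Bm PX q y m := by
  unfold Bm Qm
  rw [Pr_eq_sum, Fintype.sum_prod_type]
  dsimp only
  refine Finset.sum_congr rfl fun x' _ => ?_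
  rw [← tailsum q hq1 hq3 (n+1-m) m (by omega) x' y, Finset.mul_sum]
  refine Finset.sum_congr rfl fun y' _ => ?_
  by_cases h : ∀ j : Fin (n+1), (j:ℕ) < m → y' j = y j
  · rw [if_pos h, if_pos h, hq4]
  · rw [if_neg h, if_neg h, mul_zero]

lemma PrXY_comp
    (hq1 : ∀ i x y, ∑ b, q i x y b = 1)
    (hq3 : ∀ (i : Fin (n+1)) x x' y y', (∀ j : Fin (n+1), (j : ℕ) ≤ (i : ℕ) → x j = x' j) →
      (∀ j : Fin (n+1), (j : ℕ) < (i : ℕ) → y j = y' j) → q i x y = q i x' y')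
    (hq4 : ∀ x y, K x y = ∏ i, q i x y (y i))
    (i : Fin (n+1)) (m : ℕ) (hm : m ≤ (i:ℕ)+1) (x : Fin (n+1) → Xa) (y : Fin (n+1) → Ya) :
    Pr (fun z : (Fin (n+1) → Xa) × (Fin (n+1) → Ya) => PX z.1 * K z.1 z.2)
      (fun w => (∀ j : Fin (n+1), (j:ℕ) ≤ (i:ℕ) → w.1 j = x j) ∧
        (∀ j : Fin (n+1), (j:ℕ) < m → w.2 j = y j))
    = Qm q x y m * Af PX x i := by
  unfold Qm Af
  rw [Pr_eq_sum, Fintype.sum_prod_type]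
  dsimp only
  rw [Finset.mul_sum]
  refine Finset.sum_congr rfl fun x' _ => ?_
  by_cases hA : ∀ j : Fin (n+1), (j:ℕ) ≤ (i:ℕ) → x' j = x j
  · rw [if_pos hA]
    have h2 : (∏ j : Fin (n+1), if (j:ℕ) < m then q j x y (y j) else 1)
        = ∏ j : Fin (n+1), if (j:ℕ) < m then q j x' y (y j) else 1 := by
      refine Finset.prod_congr rfl fun j _ => ?_
      by_cases hj : (j:ℕ) < m
      · rw [if_pos hj, if_pos hj,
          hq3 j x x' y y (fun j' hj' => (hA j' (by omega)).symm) (fun _ _ => rfl)]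
      · rw [if_neg hj, if_neg hj]
    rw [h2, ← tailsum q hq1 hq3 (n+1-m) m (by omega) x' y, Finset.sum_mul]
    refine Finset.sum_congr rfl fun y' _ => ?_
    by_cases h : ∀ j : Fin (n+1), (j:ℕ) < m → y' j = y j
    · rw [if_pos ⟨hA, h⟩, if_pos h, hq4]; ring
    · rw [if_neg (fun hc => h hc.2), if_neg h, zero_mul]
  · rw [if_neg hA, mul_zero]
    refine Finset.sum_eq_zero fun y' _ => ?_
    rw [if_neg (fun hc => hA hc.1)]

end PrComp

/-- for a nonanticipative conditional distribution, mutual information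
equals directed information: `I(X^n;Y^n) = ∑_{i=0}^n I(X^i; Y_i | Y^{i-1})`. -/
theorem MI_eq_directed_information_of_nonanticipative {n : ℕ} {Xa Ya : Type}
    [Fintype Xa] [Fintype Ya]
    (PX : (Fin (n+1) → Xa) → ℝ) (hPX0 : ∀ x, 0 ≤ PX x) (hPX1 : ∑ x, PX x = 1)
    (K : (Fin (n+1) → Xa) → (Fin (n+1) → Ya) → ℝ)
    (hK0 : ∀ x y, 0 ≤ K x y) (hK1 : ∀ x, ∑ y, K x y = 1) (hNA : NA K) :
    MI (fun z : (Fin (n+1) → Xa) × (Fin (n+1) → Ya) => PX z.1 * K z.1 z.2) =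
      DI (fun z : (Fin (n+1) → Xa) × (Fin (n+1) → Ya) => PX z.1 * K z.1 z.2)
        (fun z => z.1) (fun z => z.2) := by
  obtain ⟨q, hq0, hq1, hq3n, hq4⟩ := hNA
  have hq3 : ∀ (i : Fin (n+1)) x x' y y',
      (∀ j : Fin (n+1), (j : ℕ) ≤ (i : ℕ) → x j = x' j) →
      (∀ j : Fin (n+1), (j : ℕ) < (i : ℕ) → y j = y' j) → q i x y = q i x' y' := by
    intro i x x' y y' h1 h2
    have := hq3n i x x' y y' h1 h2
    exact this
  unfold MI DI CMI
  rw [Finset.sum_comm]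
  refine Finset.sum_congr rfl fun z _ => ?_
  obtain ⟨x, y⟩ := z
  rw [← Finset.mul_sum]
  dsimp only
  by_cases hz : PX x * K x y = 0
  · rw [hz, zero_mul, zero_mul]
  have hPXx : 0 < PX x :=
    (hPX0 x).lt_of_ne (Ne.symm fun h => hz (by rw [h, zero_mul]))
  have hKxy : 0 < K x y :=
    (hK0 x y).lt_of_ne (Ne.symm fun h => hz (by rw [h, mul_zero]))
  have hpos : 0 < PX x * K x y := mul_pos hPXx hKxy
  have hmu0 : ∀ w : (Fin (n+1) → Xa) × (Fin (n+1) → Ya), 0 ≤ PX w.1 * K w.1 w.2 :=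
    fun w => mul_nonneg (hPX0 _) (hK0 _ _)
  have hqne : ∀ j : Fin (n+1), q j x y (y j) ≠ 0 := by
    intro j h
    exact hKxy.ne' (by rw [hq4]; exact Finset.prod_eq_zero (Finset.mem_univ j) h)
  have hqpos : ∀ j : Fin (n+1), 0 < q j x y (y j) :=
    fun j => (hq0 j x y (y j)).lt_of_ne (Ne.symm (hqne j))
  have hQm : ∀ m : ℕ, 0 < Qm q x y m := by
    intro m
    refine Finset.prod_pos fun j _ => ?_
    by_cases h : (j:ℕ) < m
    · rw [if_pos h]; exact hqpos j
    · rw [if_neg h]; exact one_pos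
  have hBm : ∀ m : ℕ, m ≤ n+1 → 0 < Bm PX q y m := by
    intro m hm
    rw [← PrY_comp PX K q hq1 hq3 hq4 m hm y]
    exact Pr_pos hmu0 (z := (x,y)) (fun j hj => rfl) hpos
  have hAf : ∀ i : Fin (n+1), 0 < Af PX x i := by
    intro i
    have h1 : (if (∀ j : Fin (n+1), (j:ℕ) ≤ (i:ℕ) → x j = x j) then PX x else 0)
        ≤ Af PX x i := by
      refine Finset.single_le_sum (f := fun x' =>
        if (∀ j : Fin (n+1), (j:ℕ) ≤ (i:ℕ) → x' j = x j) then PX x' else 0)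
        (fun x' _ => ?_) (Finset.mem_univ x)
      split
      exacts [hPX0 x', le_refl 0]
    rw [if_pos (fun _ _ => rfl)] at h1
    exact lt_of_lt_of_le hPXx h1
  -- event translations
  have hiffF : ∀ (i : Fin (n+1)) (w : (Fin (n+1) → Xa) × (Fin (n+1) → Ya)),
      ((fun j : {j : Fin (n+1) // (j:ℕ) ≤ (i:ℕ)} => w.1 j.1) = fun j => x j.1)
        ↔ (∀ j : Fin (n+1), (j:ℕ) ≤ (i:ℕ) → w.1 j = x j) := by
    intro i w
    rw [funext_iff]
    exact ⟨fun h j hj => h ⟨j, hj⟩, fun h j => h j.1 j.2⟩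
  have hiffH : ∀ (i : Fin (n+1)) (w : (Fin (n+1) → Xa) × (Fin (n+1) → Ya)),
      ((fun j : {j : Fin (n+1) // (j:ℕ) < (i:ℕ)} => w.2 j.1) = fun j => y j.1)
        ↔ (∀ j : Fin (n+1), (j:ℕ) < (i:ℕ) → w.2 j = y j) := by
    intro i w
    rw [funext_iff]
    exact ⟨fun h j hj => h ⟨j, hj⟩, fun h j => h j.1 j.2⟩
  have hiffGH : ∀ (i : Fin (n+1)) (w : (Fin (n+1) → Xa) × (Fin (n+1) → Ya)),
      (w.2 i = y i ∧ (∀ j : Fin (n+1), (j:ℕ) < (i:ℕ) → w.2 j = y j))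
        ↔ (∀ j : Fin (n+1), (j:ℕ) < (i:ℕ)+1 → w.2 j = y j) := by
    intro i w
    constructor
    · rintro ⟨h1, h2⟩ j hj
      rcases Nat.lt_succ_iff_lt_or_eq.mp hj with h | h
      · exact h2 j h
      · have : j = i := Fin.ext h
        rw [this]; exact h1
    · intro h
      exact ⟨h i (Nat.lt_succ_self _), fun j hj => h j (by omega)⟩
  -- the four probabilities
  have hPr1 : ∀ i : Fin (n+1),
      Pr (fun z : (Fin (n+1) → Xa) × (Fin (n+1) → Ya) => PX z.1 * K z.1 z.2) (fun w =>
        ((fun j : {j : Fin (n+1) // (j:ℕ) ≤ (i:ℕ)} => w.1 j.1) = fun j => x j.1) ∧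
          w.2 i = y i ∧
          ((fun j : {j : Fin (n+1) // (j:ℕ) < (i:ℕ)} => w.2 j.1) = fun j => y j.1))
      = Qm q x y ((i:ℕ)+1) * Af PX x i := by
    intro i
    refine (Pr_congr _ (fun w => ?_)).trans
      (PrXY_comp PX K q hq1 hq3 hq4 i ((i:ℕ)+1) (le_refl _) x y)
    rw [hiffF i w, hiffH i w]
    constructor
    · rintro ⟨h1, h2, h3⟩
      exact ⟨h1, (hiffGH i w).mp ⟨h2, h3⟩⟩
    · rintro ⟨h1, h2⟩
      have := (hiffGH i w).mpr h2
      exact ⟨h1, this.1, this.2⟩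
  have hPr2 : ∀ i : Fin (n+1),
      Pr (fun z : (Fin (n+1) → Xa) × (Fin (n+1) → Ya) => PX z.1 * K z.1 z.2) (fun w =>
        (fun j : {j : Fin (n+1) // (j:ℕ) < (i:ℕ)} => w.2 j.1) = fun j => y j.1)
      = Bm PX q y (i:ℕ) := by
    intro i
    refine (Pr_congr _ (fun w => hiffH i w)).trans
      (PrY_comp PX K q hq1 hq3 hq4 (i:ℕ) (by omega) y)
  have hPr3 : ∀ i : Fin (n+1),
      Pr (fun z : (Fin (n+1) → Xa) × (Fin (n+1) → Ya) => PX z.1 * K z.1 z.2) (fun w =>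
        ((fun j : {j : Fin (n+1) // (j:ℕ) ≤ (i:ℕ)} => w.1 j.1) = fun j => x j.1) ∧
          ((fun j : {j : Fin (n+1) // (j:ℕ) < (i:ℕ)} => w.2 j.1) = fun j => y j.1))
      = Qm q x y (i:ℕ) * Af PX x i := by
    intro i
    refine (Pr_congr _ (fun w => ?_)).trans
      (PrXY_comp PX K q hq1 hq3 hq4 i (i:ℕ) (by omega) x y)
    rw [hiffF i w, hiffH i w]
  have hPr4 : ∀ i : Fin (n+1),
      Pr (fun z : (Fin (n+1) → Xa) × (Fin (n+1) → Ya) => PX z.1 * K z.1 z.2) (fun w => w.2 i = y i ∧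
        ((fun j : {j : Fin (n+1) // (j:ℕ) < (i:ℕ)} => w.2 j.1) = fun j => y j.1))
      = Bm PX q y ((i:ℕ)+1) := by
    intro i
    refine (Pr_congr _ (fun w => ?_)).trans
      (PrY_comp PX K q hq1 hq3 hq4 ((i:ℕ)+1) (by omega) y)
    rw [hiffH i w]
    exact hiffGH i w
  congr 1
  have hstep : ∀ i : Fin (n+1),
      Real.log
        (Pr (fun z : (Fin (n+1) → Xa) × (Fin (n+1) → Ya) => PX z.1 * K z.1 z.2) (fun w =>
            ((fun j : {j : Fin (n+1) // (j:ℕ) ≤ (i:ℕ)} => w.1 j.1) = fun j => x j.1) ∧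
            w.2 i = y i ∧
            ((fun j : {j : Fin (n+1) // (j:ℕ) < (i:ℕ)} => w.2 j.1) = fun j => y j.1)) *
          Pr (fun z : (Fin (n+1) → Xa) × (Fin (n+1) → Ya) => PX z.1 * K z.1 z.2) (fun w =>
            (fun j : {j : Fin (n+1) // (j:ℕ) < (i:ℕ)} => w.2 j.1) = fun j => y j.1) /
          (Pr (fun z : (Fin (n+1) → Xa) × (Fin (n+1) → Ya) => PX z.1 * K z.1 z.2) (fun w =>
            ((fun j : {j : Fin (n+1) // (j:ℕ) ≤ (i:ℕ)} => w.1 j.1) = fun j => x j.1) ∧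
            ((fun j : {j : Fin (n+1) // (j:ℕ) < (i:ℕ)} => w.2 j.1) = fun j => y j.1)) *
          Pr (fun z : (Fin (n+1) → Xa) × (Fin (n+1) → Ya) => PX z.1 * K z.1 z.2) (fun w => w.2 i = y i ∧
            ((fun j : {j : Fin (n+1) // (j:ℕ) < (i:ℕ)} => w.2 j.1) = fun j => y j.1))))
      = Gm PX q x y ((i:ℕ)+1) - Gm PX q x y (i:ℕ) := by
    intro i
    rw [hPr1 i, hPr2 i, hPr3 i, hPr4 i]
    have p1 := hQm ((i:ℕ)+1)
    have p2 := hQm (i:ℕ)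
    have p3 := hBm (i:ℕ) (by omega)
    have p4 := hBm ((i:ℕ)+1) (by omega)
    have p5 := hAf i
    unfold Gm
    rw [Real.log_div (by positivity) (by positivity),
      Real.log_mul (by positivity) (by positivity),
      Real.log_mul (by positivity) (by positivity),
      Real.log_mul (by positivity) (by positivity),
      Real.log_mul (by positivity) (by positivity)]
    ring
  have hsum := Finset.sum_congr (rfl :
      (Finset.univ : Finset (Fin (n+1))) = Finset.univ) fun i _ => hstep i
  refine Eq.trans ?_ hsum.symm
  have hTel : (∑ i : Fin (n+1), (Gm PX q x y ((i:ℕ)+1) - Gm PX q x y (i:ℕ)))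
      = Gm PX q x y (n+1) - Gm PX q x y 0 := by
    rw [Fin.sum_univ_eq_sum_range (fun m => Gm PX q x y (m+1) - Gm PX q x y m) (n+1)]
    exact Finset.sum_range_sub (Gm PX q x y) (n+1)
  rw [hTel]
  have hQ0 : Qm q x y 0 = 1 := Finset.prod_eq_one fun j _ => if_neg (by omega)
  have hB0 : Bm PX q y 0 = 1 := by
    unfold Bm
    have h : ∀ x' : Fin (n+1) → Xa, Qm q x' y 0 = 1 :=
      fun x' => Finset.prod_eq_one fun j _ => if_neg (by omega)
    calc (∑ x' : Fin (n+1) → Xa, PX x' * Qm q x' y 0)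
        = ∑ x' : Fin (n+1) → Xa, PX x' :=
          Finset.sum_congr rfl fun x' _ => by rw [h x', mul_one]
      _ = 1 := hPX1
  have hQtop : Qm q x y (n+1) = K x y := by
    unfold Qm
    rw [hq4]
    exact Finset.prod_congr rfl fun j _ => if_pos j.isLt
  have hQtop' : ∀ x' : Fin (n+1) → Xa, Qm q x' y (n+1) = K x' y := by
    intro x'
    unfold Qm
    rw [hq4]
    exact Finset.prod_congr rfl fun j _ => if_pos j.isLt
  have hBtop : Bm PX q y (n+1) = ∑ x', PX x' * K x' y := by
    unfold Bm
    exact Finset.sum_congr rfl fun x' _ => by rw [hQtop' x']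
  have hMx : (∑ y1 : Fin (n+1) → Ya, PX x * K x y1) = PX x := by
    rw [← Finset.mul_sum, hK1, mul_one]
  have hBpos := hBm (n+1) (le_refl _)
  rw [hMx, ← hBtop]
  unfold Gm
  rw [hQ0, hB0, hQtop, Real.log_one,
    Real.log_div (by positivity) (by positivity),
    Real.log_mul (by positivity) (by positivity),
    Real.log_mul (by positivity) (by positivity)]
  ring
end

section
/- For the binary symmetric Markov source BSMS(p) with Hamming distortion, the nonanticipative rate distortion function satisfies R^{na}(D) = H(m) - H(D) for 0 < D ≤ 1/2, where m = 1 - p - D + 2pD and H(x) = -x log x - (1-x) log(1-x) is the binary entropy function; in particular show that H(m) - H(D) ≥ 0 for all 0 < p < 1 and 0 < D ≤ 1/2, with equality when D = 1/2. -/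
/-- The binary entropy function. -/
noncomputable def Hb (x : ℝ) : ℝ := -x * Real.log x - (1 - x) * Real.log (1 - x)

lemma Hb_eq_binEntropy (x : ℝ) : Hb x = Real.binEntropy x := by
  simp [Hb, Real.binEntropy, Real.log_inv]; ring

/-- for the BSMS(p) with Hamming distortion the nonanticipative RDF
`R^{na}(D) = H(m) - H(D)` is nonnegative: with `m = (1-p)(1-D)+pD = 1-p-D+2pD`,
`H(m) - H(D) ≥ 0` for all `0 < p < 1` and `0 < D ≤ 1/2`, with equality iff `D = 1/2`. -/
theorem BSMS_nonanticipative_RDF_nonneg (p D : ℝ)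
    (hp : 0 < p) (hp1 : p < 1) (hD : 0 < D) (hD2 : D ≤ 1/2) :
    0 ≤ Hb ((1-p)*(1-D) + p*D) - Hb D ∧
    (Hb ((1-p)*(1-D) + p*D) - Hb D = 0 ↔ D = 1/2) := by
  set m : ℝ := (1-p)*(1-D) + p*D with hm
  set q : ℝ := 1/2 - |1 - 2*p| * (1/2 - D) with hq
  have habs : |1 - 2*p| < 1 := by
    rw [abs_lt]; constructor <;> linarith
  have habs0 : 0 ≤ |1 - 2*p| := abs_nonneg _
  have hqD : D ≤ q := by
    have : |1 - 2*p| * (1/2 - D) ≤ 1 * (1/2 - D) :=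
      mul_le_mul_of_nonneg_right habs.le (by linarith)
    simp only [hq]; linarith
  have hq2 : q ≤ 1/2 := by
    have : 0 ≤ |1 - 2*p| * (1/2 - D) := mul_nonneg habs0 (by linarith)
    simp only [hq]; linarith
  have hHmq : Hb m = Hb q := by
    rcases abs_cases (1 - 2*p) with ⟨h1, _⟩ | ⟨h1, _⟩
    · have : m = 1 - q := by simp only [hq, h1]; ring
      rw [this, Hb_eq_binEntropy, Hb_eq_binEntropy, Real.binEntropy_one_sub]
    · have : m = q := by simp only [hq, h1]; ring
      rw [this]
  have hmono := Real.binEntropy_strictMonoOn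
  have hDmem : D ∈ Set.Icc (0:ℝ) 2⁻¹ := ⟨hD.le, by linarith⟩
  have hqmem : q ∈ Set.Icc (0:ℝ) 2⁻¹ := ⟨by linarith, by linarith⟩
  have hle : Hb D ≤ Hb q := by
    rw [Hb_eq_binEntropy, Hb_eq_binEntropy]
    exact hmono.monotoneOn hDmem hqmem hqD
  constructor
  · rw [hHmq]; linarith
  · constructor
    · intro h0
      have hqeqD : q = D := by
        by_contra hne
        have hlt : D < q := lt_of_le_of_ne hqD (Ne.symm hne)
        have := hmono hDmem hqmem hlt
        rw [← Hb_eq_binEntropy, ← Hb_eq_binEntropy] at this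
        rw [hHmq] at h0; linarith
      -- q = D means |1-2p| * (1/2 - D) = 1/2 - D, so (1-|1-2p|)(1/2-D)=0
      have : (1 - |1 - 2*p|) * (1/2 - D) = 0 := by
        simp only [hq] at hqeqD; linarith [hqeqD]
      rcases mul_eq_zero.1 this with h | h
      · linarith
      · linarith
    · intro h
      subst h
      have : m = 1/2 := by simp only [hm]; ring
      rw [this, sub_self]
end

section
/- Consider the Markov transition kernel on {0,1}×{0,1} for the pair (X_i, Y_i) where X is BSMS(p) and Y_i given (X_i, Y_{i-1}) follows the kernel with parameters α = (1-p)(1-D)/m and β = p(1-D)/(p+D-2pD): namely P(Y_i = X_i | X_i = Y_{i-1}) = α and P(Y_i = X_i | X_i ≠ Y_{i-1}) = β. Then under the stationary joint law, E[ρ(X_i, Y_i)] = D where ρ is Hamming distortion. -/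
open scoped BigOperators

/-- for the joint Markov chain `Z_i = (X_i, Y_i)` of the BSMS(p) source and
the optimal `(α,β)` reproduction kernel, the stationary expected Hamming distortion is `D`. -/
theorem BSMS_stationary_expected_distortion (p D α β : ℝ)
    (hp : 0 < p) (hp1 : p < 1) (hD : 0 < D) (hD2 : D < 1/2)
    (hα : α = (1-p)*(1-D)/(1-p-D+2*p*D)) (hβ : β = p*(1-D)/(p+D-2*p*D))
    (PZ : Fin 2 × Fin 2 → Fin 2 × Fin 2 → ℝ)
    (hPZ : ∀ z z' : Fin 2 × Fin 2, PZ z z' =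
      (if z'.1 = z.1 then 1 - p else p) *
      (if z'.2 = z'.1 then (if z.2 = z'.1 then α else β)
       else (if z.2 = z'.1 then 1 - α else 1 - β))) :
    ∀ π : Fin 2 × Fin 2 → ℝ, (∀ z, 0 ≤ π z) → (∑ z, π z = 1) →
      (∀ z', ∑ z, π z * PZ z z' = π z') →
      ∑ z, π z * (if z.1 = z.2 then (0:ℝ) else 1) = D := by
  intro π hpos hsum hstat
  have hm : (0:ℝ) < 1-p-D+2*p*D := by nlinarith
  have hn : (0:ℝ) < p+D-2*p*D := by nlinarith
  have h1 := hstat (0,1)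
  have h2 := hstat (1,0)
  simp only [Fintype.sum_prod_type, Fin.sum_univ_two, hPZ] at h1 h2 hsum ⊢
  norm_num at h1 h2 hsum ⊢
  set K : ℝ := (1-p)*(1-α)+p*(1-β) with hK
  set L : ℝ := (1-p)*(1-β)+p*(1-α) with hL
  have key : (1 - (π (0,1) + π (1,0)))*K + (π (0,1) + π (1,0))*L = π (0,1) + π (1,0) := by
    rw [hK, hL]; linear_combination h1 + h2 - K * hsum
  have hI : (1-D)*K + D*L = D := by
    rw [hK, hL, hα, hβ]
    have e1 : (1-p)*(1-D)/(1-p-D+2*p*D) * (1-p-D+2*p*D) = (1-p)*(1-D) := div_mul_cancel₀ _ hm.ne'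
    have e2 : p*(1-D)/(p+D-2*p*D) * (p+D-2*p*D) = p*(1-D) := div_mul_cancel₀ _ hn.ne'
    linear_combination -e1 - e2
  have hKpos : 0 < K := by
    have h1α : 1 - α = p*D/(1-p-D+2*p*D) := by
      rw [hα]; field_simp [show (1-p-D+p*D*2) ≠ 0 by linarith]; ring
    have h1β : 1 - β = D*(1-p)/(p+D-2*p*D) := by
      rw [hβ]; field_simp [show p+D-p*D*2 ≠ 0 by linarith]; ring
    rw [hK, h1α, h1β]
    have t1 : 0 < p*D/(1-p-D+2*p*D) := div_pos (mul_pos hp hD) hm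
    have t2 : 0 < D*(1-p)/(p+D-2*p*D) := div_pos (mul_pos hD (by linarith : (0:ℝ) < 1-p)) hn
    nlinarith
  have hzero : (π (0,1) + π (1,0) - D)*(1+K-L) = 0 := by
    linear_combination hI - key
  have hfac : 1 + K - L = K/D := by
    rw [eq_div_iff hD.ne']
    linear_combination -hI
  have hpos' : 0 < 1 + K - L := by rw [hfac]; exact div_pos hKpos hD
  rcases mul_eq_zero.mp hzero with h | h
  · linarith
  · linarith
end
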